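/- Let n ∈ ℕ and suppose the set {j ≥ 2 : ε_j(n) = 1} is a union of maximal blocks [a_i, b_i], i = 1,…,s, with a_1 ≤ b_1 < a_2 ≤ … ≤ b_s and b_i + 1 < a_{i+1}. Define H_n^{(1)}(t) = Σ_{j=2}^{|n|} ε_j(n)(D_{2^{j+1}}(t) − D_{2^j}(t)) l_{n(j-1)} (up to the Walsh factor w_n(t) of modulus 1). Then for every k and every t in the interval A_k := (2^{-(a_k+1)}, 2^{-a_k}), one has |H_n^{(1)}(t)| ≥ 2^{a_k - 1} · l_{n(a_k - 1)}. -/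

import Mathlib

/-!
Fix `t ∈ (2^{-(A+1)}, 2^{-A})` with `A = a_k`. The Rademacher functions `ρ_0, …, ρ_{A-1}` equal
`1` at `t` and `ρ_A(t) = -1`, so `D_{2^j}(t) = ∏_{i<j} (1 + ρ_i(t))` is `2^j` for `j ≤ A` and `0`
for `j > A`. In `H_n^{(1)}(t)` the terms with `j > A` therefore vanish, the term `j = A` is
`-2^A l_{n(A-1)}`, the term `j = A - 1` vanishes because `A` starts a maximal block of ones, and
each term with `j ≤ A - 2` lies in `[0, 2^j l_{n(A-1)}]` since `l` is monotone. These sum to at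
most `(2^{A-1} - 1) l_{n(A-1)}`, which leaves at least `2^{A-1} l_{n(A-1)}`.
-/

open MeasureTheory Finset Filter Set

noncomputable section

/-- `k`-th binary digit of `x ∈ [0,1)`. -/
def xdigit (k : ℕ) (x : ℝ) : ℕ := ⌊x * 2 ^ (k + 1)⌋.toNat % 2

/-- Rademacher function `ρ_k(x) = (-1)^{x_k}`. -/
def rademacher (k : ℕ) (x : ℝ) : ℝ := (-1 : ℝ) ^ xdigit k x

/-- `j`-th binary digit of the natural number `n`. -/
def eps (j n : ℕ) : ℕ := n / 2 ^ j % 2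

/-- Walsh-Paley function `w_n(x) = ∏_k ρ_k(x)^{n_k}`. -/
def walsh (n : ℕ) (x : ℝ) : ℝ := ∏ k ∈ Finset.range (n + 1), rademacher k x ^ eps k n

/-- Walsh-Dirichlet kernel `D_n(x) = ∑_{m<n} w_m(x)`. -/
def Dker (n : ℕ) (x : ℝ) : ℝ := ∑ m ∈ Finset.range n, walsh m x

/-- `l_m = ∑_{k=1}^{m-1} 1/k`. -/
def lsum (m : ℕ) : ℝ := ∑ k ∈ Finset.Ico 1 m, (1 : ℝ) / k

/-- Logarithmic variation `V_L(n)`; note `n(k-1) = n % 2^k`. -/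
def VL (n : ℕ) : ℝ :=
  (1 / (Nat.log 2 n : ℝ)) *
    ∑ k ∈ Finset.Icc 1 (Nat.log 2 n),
      |(eps k n : ℝ) - (eps (k + 1) n : ℝ)| * lsum (n % 2 ^ k)

lemma Nat.mod_le_mod_of_dvd (n : ℕ) {i j : ℕ} (h : i ∣ j) : n % i ≤ n % j :=
  (Nat.mod_mod_of_dvd n h).symm.trans_le (Nat.mod_le _ _)

lemma lsum_nonneg (m : ℕ) : 0 ≤ lsum m :=
  sum_nonneg fun _ _ => by positivity

lemma lsum_mono : Monotone lsum := fun _ _ h =>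
  sum_le_sum_of_subset_of_nonneg (Ico_subset_Ico le_rfl h) fun _ _ _ => by positivity

lemma eps_eq_toNat_testBit (j n : ℕ) : eps j n = (n.testBit j).toNat :=
  (Nat.toNat_testBit n j).symm

lemma eps_lt_two (j n : ℕ) : eps j n < 2 :=
  Nat.mod_lt _ two_pos

lemma eps_eq_zero_of_lt {j n : ℕ} (h : n < 2 ^ j) : eps j n = 0 := by
  rw [eps_eq_toNat_testBit, Nat.testBit_eq_false_of_lt h, Bool.toNat_false]

lemma le_log_of_eps_eq_one {j n : ℕ} (h : eps j n = 1) : j ≤ Nat.log 2 n := by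
  by_contra! hlt
  have := eps_eq_zero_of_lt ((Nat.lt_pow_succ_log_self one_lt_two n).trans_le
    (Nat.pow_le_pow_right two_pos hlt))
  omega

lemma eps_two_pow_add_of_lt {j m : ℕ} (h : j < m) (i : ℕ) : eps j (2 ^ m + i) = eps j i := by
  simp only [eps_eq_toNat_testBit, Nat.testBit_two_pow_add_gt h]

lemma eps_two_pow_add_self {m i : ℕ} (hi : i < 2 ^ m) : eps m (2 ^ m + i) = 1 := by
  rw [eps_eq_toNat_testBit, Nat.testBit_two_pow_add_eq, Nat.testBit_eq_false_of_lt hi]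
  rfl

lemma walsh_eq_prod_range {n N : ℕ} (h : n < 2 ^ N) (x : ℝ) :
    walsh n x = ∏ k ∈ range N, rademacher k x ^ eps k n := by
  have hone : ∀ k, n < 2 ^ k → rademacher k x ^ eps k n = 1 := fun k hk => by
    rw [eps_eq_zero_of_lt hk, pow_zero]
  rcases le_total (n + 1) N with hle | hle
  · refine prod_subset (range_subset_range.2 hle) fun k _ hk => hone k ?_
    exact n.lt_two_pow_self.trans_le (Nat.pow_le_pow_right two_pos (by simp at hk; omega))
  · refine (prod_subset (range_subset_range.2 hle) fun k _ hk => hone k ?_).symm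
    exact h.trans_le (Nat.pow_le_pow_right two_pos (by simpa using hk))

lemma walsh_two_pow_add {m i : ℕ} (hi : i < 2 ^ m) (x : ℝ) :
    walsh (2 ^ m + i) x = walsh i x * rademacher m x := by
  have hlt : 2 ^ m + i < 2 ^ (m + 1) := by rw [pow_succ]; omega
  rw [walsh_eq_prod_range hlt, walsh_eq_prod_range hi, prod_range_succ,
    eps_two_pow_add_self hi, pow_one]
  congr 1
  exact prod_congr rfl fun j hj => by rw [eps_two_pow_add_of_lt (mem_range.1 hj)]

lemma Dker_two_pow (m : ℕ) (x : ℝ) :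
    Dker (2 ^ m) x = ∏ k ∈ range m, (1 + rademacher k x) := by
  induction m with
  | zero => simp [Dker, walsh, eps]
  | succ m ih =>
    have hsplit : Dker (2 ^ (m + 1)) x = Dker (2 ^ m) x + Dker (2 ^ m) x * rademacher m x := by
      rw [Dker, pow_succ, mul_two, sum_range_add, Dker, sum_mul]
      congr 1
      exact sum_congr rfl fun i hi => walsh_two_pow_add (mem_range.1 hi) x
    rw [hsplit, prod_range_succ, ← ih]
    ring

lemma rademacher_of_lt_one {k : ℕ} {t : ℝ} (h0 : 0 ≤ t) (h1 : t * 2 ^ (k + 1) < 1) :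
    rademacher k t = 1 := by
  have hfloor : ⌊t * 2 ^ (k + 1)⌋ = 0 := Int.floor_eq_zero_iff.2 ⟨by positivity, h1⟩
  simp [rademacher, xdigit, hfloor]

lemma rademacher_of_one_le_of_lt_two {k : ℕ} {t : ℝ} (h1 : 1 ≤ t * 2 ^ (k + 1))
    (h2 : t * 2 ^ (k + 1) < 2) : rademacher k t = -1 := by
  have hfloor : ⌊t * 2 ^ (k + 1)⌋ = 1 :=
    Int.floor_eq_iff.2 ⟨by exact_mod_cast h1, by norm_num [h2]⟩
  simp [rademacher, xdigit, hfloor]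

section DyadicInterval

variable {A : ℕ} {t : ℝ}

lemma Ioo_two_pow_inv_subset_Ico :
    Set.Ioo ((2 : ℝ) ^ (A + 1))⁻¹ ((2 : ℝ) ^ A)⁻¹ ⊆ Set.Ico 0 ((2 : ℝ) ^ A)⁻¹ :=
  Set.Ioo_subset_Ico_self.trans (Set.Ico_subset_Ico_left (by positivity))

lemma Dker_two_pow_of_le (ht : t ∈ Set.Ico 0 ((2 : ℝ) ^ A)⁻¹) {j : ℕ} (hj : j ≤ A) :
    Dker (2 ^ j) t = 2 ^ j := by
  have hA : t * 2 ^ A < 1 := by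
    have := mul_lt_mul_of_pos_right ht.2 (by positivity : (0 : ℝ) < 2 ^ A)
    rwa [inv_mul_cancel₀ (by positivity)] at this
  have hrad : ∀ k ∈ range j, 1 + rademacher k t = 2 := fun k hk => by
    rw [rademacher_of_lt_one ht.1 ((mul_le_mul_of_nonneg_left (pow_le_pow_right₀ one_le_two
      (by simp at hk; omega)) ht.1).trans_lt hA)]
    norm_num
  rw [Dker_two_pow, prod_congr rfl hrad, prod_const, card_range]

lemma Dker_two_pow_of_lt (ht : t ∈ Set.Ioo ((2 : ℝ) ^ (A + 1))⁻¹ ((2 : ℝ) ^ A)⁻¹) {j : ℕ}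
    (hj : A < j) : Dker (2 ^ j) t = 0 := by
  have hpos : (0 : ℝ) < 2 ^ (A + 1) := by positivity
  have h1 : 1 ≤ t * 2 ^ (A + 1) :=
    calc 1 = ((2 : ℝ) ^ (A + 1))⁻¹ * 2 ^ (A + 1) := (inv_mul_cancel₀ hpos.ne').symm
      _ ≤ t * 2 ^ (A + 1) := mul_le_mul_of_nonneg_right ht.1.le hpos.le
  have h2 : t * 2 ^ (A + 1) < 2 :=
    calc t * 2 ^ (A + 1) < ((2 : ℝ) ^ A)⁻¹ * 2 ^ (A + 1) := mul_lt_mul_of_pos_right ht.2 hpos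
      _ = 2 := by rw [pow_succ, inv_mul_cancel_left₀ (by positivity)]
  rw [Dker_two_pow]
  refine prod_eq_zero (mem_range.2 hj) ?_
  rw [rademacher_of_one_le_of_lt_two h1 h2]
  ring

lemma Dker_two_pow_succ_sub_of_lt {j : ℕ} (ht : t ∈ Set.Ico 0 ((2 : ℝ) ^ A)⁻¹)
    (hj : j < A) : Dker (2 ^ (j + 1)) t - Dker (2 ^ j) t = 2 ^ j := by
  rw [Dker_two_pow_of_le ht (show j + 1 ≤ A from hj), Dker_two_pow_of_le ht hj.le]
  ring

lemma Dker_two_pow_succ_sub_self (ht : t ∈ Set.Ioo ((2 : ℝ) ^ (A + 1))⁻¹ ((2 : ℝ) ^ A)⁻¹) :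
    Dker (2 ^ (A + 1)) t - Dker (2 ^ A) t = -2 ^ A := by
  rw [Dker_two_pow_of_lt ht A.lt_succ_self,
    Dker_two_pow_of_le (Ioo_two_pow_inv_subset_Ico ht) le_rfl]
  ring

lemma Dker_two_pow_succ_sub_of_gt (ht : t ∈ Set.Ioo ((2 : ℝ) ^ (A + 1))⁻¹ ((2 : ℝ) ^ A)⁻¹)
    {j : ℕ} (hj : A < j) :
    Dker (2 ^ (j + 1)) t - Dker (2 ^ j) t = 0 := by
  rw [Dker_two_pow_of_lt ht hj, Dker_two_pow_of_lt ht (hj.trans j.lt_succ_self), sub_zero]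

end DyadicInterval

lemma two_pow_pred_mul_le_abs_sum {S : Finset ℕ} {g : ℕ → ℝ} {A : ℕ} {L : ℝ} (hA : A ∈ S)
    (htop : |g A| = 2 ^ A * L)
    (hrest : ∀ j ∈ S, j ≠ A → g j ≠ 0 → j + 2 ≤ A ∧ |g j| ≤ 2 ^ j * L) :
    2 ^ (A - 1) * L ≤ |∑ j ∈ S, g j| := by
  have hL : 0 ≤ L := (mul_nonneg_iff_of_pos_left (by positivity)).1 (htop ▸ abs_nonneg _)
  have hsmall : |∑ j ∈ S.erase A, g j| ≤ (2 ^ (A - 1) - 1) * L :=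
    calc |∑ j ∈ S.erase A, g j| ≤ ∑ j ∈ S.erase A, |g j| := abs_sum_le_sum_abs _ _
      _ = ∑ j ∈ S.erase A with g j ≠ 0, |g j| :=
        (sum_filter_of_ne fun j _ h => abs_ne_zero.1 h).symm
      _ ≤ ∑ j ∈ S.erase A with g j ≠ 0, 2 ^ j * L := sum_le_sum fun j hj => by
        obtain ⟨hjS, hjg⟩ := mem_filter.1 hj
        exact (hrest j (mem_of_mem_erase hjS) (ne_of_mem_erase hjS) hjg).2
      _ ≤ ∑ j ∈ range (A - 1), 2 ^ j * L := by
        refine sum_le_sum_of_subset_of_nonneg (fun j hj => ?_) fun j _ _ => by positivity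
        obtain ⟨hjS, hjg⟩ := mem_filter.1 hj
        have := (hrest j (mem_of_mem_erase hjS) (ne_of_mem_erase hjS) hjg).1
        exact mem_range.2 (by omega)
      _ = (2 ^ (A - 1) - 1) * L := by rw [← sum_mul, geom_sum_eq (by norm_num)]; norm_num
  have htri : |g A| ≤ |g A + ∑ j ∈ S.erase A, g j| + |∑ j ∈ S.erase A, g j| := by
    simpa using abs_sub (g A + ∑ j ∈ S.erase A, g j) (∑ j ∈ S.erase A, g j)
  have hpow : (2 : ℝ) ^ (A - 1) * 2 ≤ 2 ^ A + 1 := by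
    rcases A with _ | A <;> norm_num [pow_succ]
  rw [← add_sum_erase S g hA]
  nlinarith

section Blocks

variable {s : ℕ} {a b : ℕ → ℕ}

lemma strictMonoOn_block_start (hab : ∀ i ∈ Finset.Icc 1 s, a i ≤ b i)
    (hba : ∀ i ∈ Finset.Icc 1 (s - 1), b i + 1 < a (i + 1)) : StrictMonoOn a (Set.Icc 1 s) := by
  refine strictMonoOn_of_lt_succ Set.ordConnected_Icc fun i _ hi hi' => ?_
  rw [Order.succ_eq_add_one] at hi' ⊢
  have := hab i (by simpa using hi)
  have := hba i (mem_Icc.2 ⟨hi.1, by simp at hi'; omega⟩)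
  omega

lemma eps_eq_zero_of_succ_eq_block_start {n : ℕ} (hab : ∀ i ∈ Finset.Icc 1 s, a i ≤ b i)
    (hba : ∀ i ∈ Finset.Icc 1 (s - 1), b i + 1 < a (i + 1))
    (hdig : ∀ j : ℕ, 2 ≤ j → (eps j n = 1 ↔ ∃ i ∈ Finset.Icc 1 s, a i ≤ j ∧ j ≤ b i))
    {k j : ℕ} (hk : k ∈ Finset.Icc 1 s) (hj : 2 ≤ j) (hjk : j + 1 = a k) : eps j n = 0 := by
  have hmono := (strictMonoOn_block_start hab hba).monotoneOn
  by_contra hne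
  obtain ⟨i, hi, hai, hbi⟩ :=
    (hdig j hj).1 (by have := eps_lt_two j n; omega)
  obtain ⟨hi1, his⟩ := mem_Icc.1 hi
  obtain ⟨hk1, hks⟩ := mem_Icc.1 hk
  rcases lt_or_ge i k with hik | hki
  · have hgap := hba i (mem_Icc.2 ⟨hi1, by omega⟩)
    have := hmono (a := i + 1) ⟨by omega, by omega⟩ ⟨hk1, hks⟩ hik
    omega
  · have := hmono (a := k) ⟨hk1, hks⟩ ⟨hi1, his⟩ hki
    omega

end Blocks

theorem statement7_general (n s : ℕ) (a b : ℕ → ℕ)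
    (hab : ∀ i ∈ Finset.Icc 1 s, a i ≤ b i)
    (ha2 : 2 ≤ a 1)
    (hba : ∀ i ∈ Finset.Icc 1 (s - 1), b i + 1 < a (i + 1))
    (hdig : ∀ j : ℕ, 2 ≤ j → (eps j n = 1 ↔ ∃ i ∈ Finset.Icc 1 s, a i ≤ j ∧ j ≤ b i))
    (k : ℕ) (hk : k ∈ Finset.Icc 1 s) (t : ℝ)
    (ht : t ∈ Set.Ioo (((2 : ℝ) ^ (a k + 1))⁻¹) (((2 : ℝ) ^ a k)⁻¹)) :
    (2 : ℝ) ^ (a k - 1) * lsum (n % 2 ^ a k) ≤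
      |∑ j ∈ Finset.Icc 2 (Nat.log 2 n),
        (eps j n : ℝ) * (Dker (2 ^ (j + 1)) t - Dker (2 ^ j) t) * lsum (n % 2 ^ j)| := by
  obtain ⟨hk1, hks⟩ := mem_Icc.1 hk
  have hA2 : 2 ≤ a k := ha2.trans <|
    (strictMonoOn_block_start hab hba).monotoneOn ⟨le_rfl, hk1.trans hks⟩ ⟨hk1, hks⟩ hk1
  have hepsA : eps (a k) n = 1 := (hdig _ hA2).2 ⟨k, hk, le_rfl, hab k hk⟩
  refine two_pow_pred_mul_le_abs_sum (mem_Icc.2 ⟨hA2, le_log_of_eps_eq_one hepsA⟩) ?_ ?_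
  · rw [hepsA, Dker_two_pow_succ_sub_self ht, Nat.cast_one, one_mul, neg_mul, abs_neg,
      abs_of_nonneg (mul_nonneg (by positivity) (lsum_nonneg _))]
  · intro j hj hjA hg
    have hepsj : eps j n = 1 := by
      have hne : eps j n ≠ 0 := fun h0 => hg (by simp [h0])
      have := eps_lt_two j n
      omega
    have hjlt : j < a k := by
      by_contra! hge
      exact hg (by rw [Dker_two_pow_succ_sub_of_gt ht (lt_of_le_of_ne hge (Ne.symm hjA))]; ring)
    have hjA1 : j + 1 ≠ a k := fun h => by
      simp [eps_eq_zero_of_succ_eq_block_start hab hba hdig hk (mem_Icc.1 hj).1 h] at hepsj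
    refine ⟨by omega, ?_⟩
    rw [hepsj, Dker_two_pow_succ_sub_of_lt (Ioo_two_pow_inv_subset_Ico ht) hjlt, Nat.cast_one,
      one_mul, abs_of_nonneg (mul_nonneg (by positivity) (lsum_nonneg _))]
    exact mul_le_mul_of_nonneg_left
      (lsum_mono (Nat.mod_le_mod_of_dvd n (pow_dvd_pow 2 hjlt.le))) (by positivity)

/-- lower bound for `H_n^{(1)}` on the intervals
`A_k = (2^{-(a_k+1)}, 2^{-a_k})`.  The blocks `[a_i, b_i]`, `i = 1,…,s`, are the
maximal runs of 1-digits of `n` among indices `≥ 2`. -/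
theorem statement7 (n s : ℕ) (hs : 1 ≤ s) (a b : ℕ → ℕ)
    (hab : ∀ i ∈ Finset.Icc 1 s, a i ≤ b i)
    (ha2 : 2 ≤ a 1)
    (hba : ∀ i ∈ Finset.Icc 1 (s - 1), b i + 1 < a (i + 1))
    (hdig : ∀ j : ℕ, 2 ≤ j → (eps j n = 1 ↔ ∃ i ∈ Finset.Icc 1 s, a i ≤ j ∧ j ≤ b i))
    (k : ℕ) (hk : k ∈ Finset.Icc 1 s) (t : ℝ)
    (ht : t ∈ Set.Ioo (((2 : ℝ) ^ (a k + 1))⁻¹) (((2 : ℝ) ^ a k)⁻¹)) :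
    (2 : ℝ) ^ (a k - 1) * lsum (n % 2 ^ a k) ≤
      |∑ j ∈ Finset.Icc 2 (Nat.log 2 n),
        (eps j n : ℝ) * (Dker (2 ^ (j + 1)) t - Dker (2 ^ j) t) * lsum (n % 2 ^ j)| :=
  statement7_general n s a b hab ha2 hba hdig k hk t ht

end
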